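/- (Lower-bound propagation, Lemma 6 of the paper.) Let C : V → ℝ≥0∞ satisfy C v ≤ cost v for every vertex v (i.e., C v is a lower bound on the cost of every path from v0 to v). Then for every vertex x with x ≠ v0, the infimum, over all v with E v x, of C v + w v x is still a lower bound on cost x; that is, ⨅ {C v + w v x : E v x} ≤ cost x. -/

import Mathlib

open scoped ENNReal

variable {V : Type*}

/-- `IsPath E v0 x p` means `p` is a finite sequence of vertices starting at `v0`,
ending at `x`, with consecutive vertices joined by edges of `E`. -/
def IsPath (E : V → V → Prop) (v0 x : V) (p : List V) : Prop :=
  p.Chain' E ∧ p.head? = some v0 ∧ p.getLast? = some x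

/-- The cost of a path: the sum of the weights of its consecutive edges. -/
noncomputable def pathCost (w : V → V → ℝ≥0∞) (p : List V) : ℝ≥0∞ :=
  ((p.zip p.tail).map fun q => w q.1 q.2).sum

/-- `cost E w v0 x` : the infimum of the costs of all paths from `v0` to `x`
(`∞` if `x` is unreachable from `v0`). -/
noncomputable def cost (E : V → V → Prop) (w : V → V → ℝ≥0∞) (v0 x : V) : ℝ≥0∞ :=
  ⨅ p : {p : List V // IsPath E v0 x p}, pathCost w p.1

lemma pathCost_cons_cons (w : V → V → ℝ≥0∞) (a b : V) (t : List V) :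
    pathCost w (a :: b :: t) = w a b + pathCost w (b :: t) := by
  simp [pathCost]

lemma pathCost_append_pair (w : V → V → ℝ≥0∞) (l : List V) (a b : V) :
    pathCost w (l ++ [a, b]) = pathCost w (l ++ [a]) + w a b := by
  induction l with
  | nil => simp [pathCost]
  | cons c l ih =>
    cases l with
    | nil => simp [pathCost, add_comm]
    | cons d l =>
      simp only [List.cons_append, pathCost_cons_cons] at ih ⊢
      rw [ih, add_assoc]

lemma cost_le_pathCost {E : V → V → Prop} (w : V → V → ℝ≥0∞) {v0 x : V} {p : List V}
    (hp : IsPath E v0 x p) : cost E w v0 x ≤ pathCost w p :=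
  iInf_le (fun q : {q : List V // IsPath E v0 x q} => pathCost w q.1) ⟨p, hp⟩

lemma IsPath.exists_eq_append_last_edge {E : V → V → Prop} {v0 x : V} {p : List V}
    (hp : IsPath E v0 x p) (hx : x ≠ v0) :
    ∃ r v, p = r ++ [v, x] ∧ IsPath E v0 v (r ++ [v]) ∧ E v x := by
  obtain ⟨hchain, hhead, hlast⟩ := hp
  obtain ⟨q, rfl⟩ := List.getLast?_eq_some_iff.mp hlast
  obtain rfl | ⟨r, v, rfl⟩ := List.eq_nil_or_concat q
  · exact absurd (by simpa using hhead) hx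
  simp only [List.concat_eq_append, List.append_assoc, List.cons_append,
    List.nil_append] at hchain hhead ⊢
  obtain ⟨hchain, -, hedge⟩ := List.isChain_append.mp (List.append_assoc r [v] [x] ▸ hchain)
  refine ⟨r, v, rfl, ⟨hchain, ?_, by simp⟩, hedge v (by simp) x rfl⟩
  cases r <;> simpa using hhead

theorem lowerBound_propagation_general (E : V → V → Prop) (w : V → V → ℝ≥0∞)
    (v0 : V) (C : V → ℝ≥0∞) (hC : ∀ v, C v ≤ cost E w v0 v)
    (x : V) (hx : x ≠ v0) :
    (⨅ v : {v : V // E v x}, (C v.1 + w v.1 x)) ≤ cost E w v0 x := by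
  refine le_iInf fun ⟨p, hp⟩ => ?_
  obtain ⟨r, v, rfl, hpath, hvx⟩ := hp.exists_eq_append_last_edge hx
  calc (⨅ u : {u : V // E u x}, (C u.1 + w u.1 x)) ≤ C v + w v x :=
        iInf_le (fun u : {u : V // E u x} => C u.1 + w u.1 x) ⟨v, hvx⟩
    _ ≤ pathCost w (r ++ [v]) + w v x := by
        gcongr
        exact (hC v).trans (cost_le_pathCost w hpath)
    _ = pathCost w (r ++ [v, x]) := (pathCost_append_pair w r v x).symm

/-- Lower-bound propagation (Lemma 6): if `C` is a pointwise lower bound on `cost`,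
then for `x ≠ v0`, `⨅ {C v + w v x : E v x}` is still a lower bound on `cost x`. -/
theorem lowerBound_propagation [Fintype V] (E : V → V → Prop) (w : V → V → ℝ≥0∞)
    (hpos : ∀ u v, E u v → 0 < w u v) (hfin : ∀ u v, E u v → w u v < ⊤)
    (v0 : V) (C : V → ℝ≥0∞) (hC : ∀ v, C v ≤ cost E w v0 v)
    (x : V) (hx : x ≠ v0) :
    (⨅ v : {v : V // E v x}, (C v.1 + w v.1 x)) ≤ cost E w v0 x :=
  lowerBound_propagation_general E w v0 C hC x hx
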